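/- arXiv:1709.05741 — 2 statements merged into one kernel-verified Lean document; each statement's English description precedes it below -/
import Mathlib

section
/- Let N be a Poisson random variable with mean μ > 0 and let (U_i)_{i∈ℕ} be an i.i.d. sequence of random variables uniformly distributed on [0, 1], with N and (U_i) independent. Fix 0 ≤ b ≤ a ≤ 1 and define N_1 = ∑_{i=0}^{N−1} 1{U_i ≤ a} and N_2 = ∑_{i=0}^{N−1} 1{U_i > b}. Then E[N_1 · N_2] = a(1−b)·μ² + (a−b)·μ. -/
/-! Conditionally on `N = n`, which is legitimate because `N` is independent of the marks, the
product of the two counts expands into `n` diagonal terms `1{b < Uᵢ ≤ a}` of mean `a - b` and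
`n (n - 1)` off-diagonal terms `1{Uᵢ ≤ a} 1{b < Uⱼ}` of mean `a (1 - b)`, by independence of
`Uᵢ` and `Uⱼ`. It remains to average over the Poisson law, whose factorial moments are
`E[N (N-1) ⋯ (N-k+1)] = μᵏ`, since `n.descFactorial k * μⁿ / n! = μᵏ * μⁿ⁻ᵏ / (n-k)!`.
Working with lower Lebesgue integrals avoids any integrability bookkeeping. -/

open MeasureTheory ProbabilityTheory Real Finset
open scoped NNReal ENNReal Nat

lemma Finset.sum_sum_ite_eq_card_nsmul_add {ι M : Type*} [DecidableEq ι] [AddCommMonoid M]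
    (s : Finset ι) (c d : M) :
    ∑ i ∈ s, ∑ j ∈ s, (if i = j then c else d) = #s • c + (#s).descFactorial 2 • d := by
  have hrow : ∀ i ∈ s, ∑ j ∈ s, (if i = j then c else d) = c + (#s - 1) • d := by
    intro i hi
    rw [← add_sum_erase _ _ hi, if_pos rfl, sum_congr rfl fun j hj ↦
      if_neg fun h ↦ (mem_erase.1 hj).1 h.symm, sum_const, card_erase_of_mem hi]
  rw [sum_congr rfl hrow, sum_const, smul_add, smul_smul, Nat.descFactorial_succ,
    Nat.descFactorial_one, mul_comm (#s - 1)]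

namespace ProbabilityTheory

lemma exp_neg_mul_pow_div_factorial_add_mul_descFactorial (x : ℝ) (n k : ℕ) :
    exp (-x) * x ^ (n + k) / (n + k)! * (n + k).descFactorial k
      = x ^ k * (exp (-x) * x ^ n / n !) := by
  have hfac : ((n + k)! : ℝ) = n ! * (n + k).descFactorial k := by
    exact_mod_cast (Nat.add_sub_cancel n k ▸
      Nat.factorial_mul_descFactorial (Nat.le_add_left k n)).symm
  have hdesc : ((n + k).descFactorial k : ℝ) ≠ 0 := by
    exact_mod_cast Nat.descFactorial_eq_zero_iff_lt.not.2 (by omega)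
  rw [hfac]
  field_simp
  ring

lemma hasSum_poissonMeasure_mul_descFactorial (r : ℝ≥0) (k : ℕ) :
    HasSum (fun n ↦ exp (-r) * r ^ n / n ! * n.descFactorial k) ((r : ℝ) ^ k) := by
  have hlow : ∑ n ∈ range k, exp (-r) * r ^ n / n ! * (n.descFactorial k : ℝ) = 0 :=
    sum_eq_zero fun n hn ↦ by
      rw [Nat.descFactorial_eq_zero_iff_lt.2 (mem_range.1 hn), Nat.cast_zero, mul_zero]
  rw [← add_zero ((r : ℝ) ^ k), ← hlow, ← hasSum_nat_add_iff]
  simpa only [exp_neg_mul_pow_div_factorial_add_mul_descFactorial, mul_one]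
    using (hasSum_one_poissonMeasure r).mul_left ((r : ℝ) ^ k)

lemma lintegral_descFactorial_poissonMeasure (r : ℝ≥0) (k : ℕ) :
    ∫⁻ n, (n.descFactorial k : ℝ≥0∞) ∂poissonMeasure r = (r : ℝ≥0∞) ^ k := by
  have hs := hasSum_poissonMeasure_mul_descFactorial r k
  rw [lintegral_countable']
  simp_rw [poissonMeasure_singleton]
  calc ∑' n : ℕ, (n.descFactorial k : ℝ≥0∞) * ENNReal.ofReal (exp (-r) * r ^ n / n !)
      = ∑' n : ℕ, ENNReal.ofReal (exp (-r) * r ^ n / n ! * n.descFactorial k) := by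
        refine tsum_congr fun n ↦ ?_
        rw [mul_comm, ENNReal.ofReal_mul (by positivity), ENNReal.ofReal_natCast]
    _ = (r : ℝ≥0∞) ^ k := by
        rw [← ENNReal.ofReal_tsum_of_nonneg (fun n ↦ by positivity) hs.summable, hs.tsum_eq,
          ← ENNReal.ofReal_coe_nnreal, ENNReal.ofReal_pow r.coe_nonneg]

lemma lintegral_mul_add_descFactorial_two_mul_poissonMeasure (r : ℝ≥0) (c d : ℝ≥0∞) :
    ∫⁻ n, (n * c + n.descFactorial 2 * d) ∂poissonMeasure r = r * c + r ^ 2 * d := by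
  have hmean := lintegral_descFactorial_poissonMeasure r 1
  simp only [Nat.descFactorial_one, pow_one] at hmean
  rw [lintegral_add_left (by fun_prop), lintegral_mul_const _ (by fun_prop),
    lintegral_mul_const _ (by fun_prop), lintegral_descFactorial_poissonMeasure, hmean]

variable {Ω α β : Type*} {mΩ : MeasurableSpace Ω} [MeasurableSpace α] [MeasurableSpace β]
  {P : Measure Ω}

theorem IndepFun.lintegral_comp_eq_lintegral_map [IsFiniteMeasure P] {X : Ω → α} {Y : Ω → β}
    (hX : Measurable X) (hY : Measurable Y) (hXY : IndepFun X Y P) {g : α → β → ℝ≥0∞}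
    (hg : Measurable (Function.uncurry g)) :
    ∫⁻ ω, g (X ω) (Y ω) ∂P = ∫⁻ x, ∫⁻ ω, g x (Y ω) ∂P ∂P.map X := by
  calc ∫⁻ ω, g (X ω) (Y ω) ∂P = ∫⁻ p, Function.uncurry g p ∂P.map (fun ω ↦ (X ω, Y ω)) :=
        (lintegral_map hg (hX.prodMk hY)).symm
    _ = ∫⁻ x, ∫⁻ y, g x y ∂P.map Y ∂P.map X := by
        rw [(indepFun_iff_map_prod_eq_prod_map_map hX.aemeasurable hY.aemeasurable).1 hXY,
          lintegral_prod _ hg.aemeasurable]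
        rfl
    _ = _ := lintegral_congr fun x ↦ lintegral_map (hg.comp measurable_prodMk_left) hY

section SumMulSum

variable {U : ℕ → Ω → β} {ν : Measure β} {f g : β → ℝ≥0∞}

lemma lintegral_comp_mul_comp_of_iIndepFun (hU : ∀ i, Measurable (U i))
    (hlaw : ∀ i, P.map (U i) = ν) (hind : iIndepFun U P) (hf : Measurable f)
    (hg : Measurable g) (i j : ℕ) :
    ∫⁻ ω, f (U i ω) * g (U j ω) ∂P
      = if i = j then ∫⁻ x, f x * g x ∂ν else (∫⁻ x, f x ∂ν) * ∫⁻ x, g x ∂ν := by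
  split_ifs with hij
  · subst hij
    rw [← hlaw i]
    exact (lintegral_map (hf.mul hg) (hU i)).symm
  · calc ∫⁻ ω, f (U i ω) * g (U j ω) ∂P = (∫⁻ ω, f (U i ω) ∂P) * ∫⁻ ω, g (U j ω) ∂P :=
          lintegral_mul_eq_lintegral_mul_lintegral_of_indepFun (hf.comp (hU i))
            (hg.comp (hU j)) ((hind.indepFun hij).comp hf hg)
      _ = _ := by
          rw [← lintegral_map hf (hU i), ← lintegral_map hg (hU j), hlaw, hlaw]

lemma lintegral_sum_mul_sum_of_iIndepFun (hU : ∀ i, Measurable (U i))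
    (hlaw : ∀ i, P.map (U i) = ν) (hind : iIndepFun U P) (hf : Measurable f)
    (hg : Measurable g) (n : ℕ) :
    ∫⁻ ω, (∑ i ∈ range n, f (U i ω)) * ∑ j ∈ range n, g (U j ω) ∂P
      = n * ∫⁻ x, f x * g x ∂ν + n.descFactorial 2 * ((∫⁻ x, f x ∂ν) * ∫⁻ x, g x ∂ν) := by
  have hmeas : ∀ i j, Measurable fun ω ↦ f (U i ω) * g (U j ω) := fun i j ↦
    (hf.comp (hU i)).mul (hg.comp (hU j))
  simp_rw [sum_mul_sum]
  rw [lintegral_finsetSum _ fun i _ ↦ Finset.measurable_sum _ fun j _ ↦ hmeas i j]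
  simp_rw [lintegral_finsetSum _ fun j _ ↦ hmeas _ j,
    lintegral_comp_mul_comp_of_iIndepFun hU hlaw hind hf hg, sum_sum_ite_eq_card_nsmul_add,
    card_range, nsmul_eq_mul]

lemma measurable_sum_range_mul_sum_range (hf : Measurable f) (hg : Measurable g) :
    Measurable fun p : ℕ × (ℕ → β) ↦ (∑ i ∈ range p.1, f (p.2 i)) * ∑ j ∈ range p.1, g (p.2 j) :=
  measurable_from_prod_countable_right fun n ↦
    show Measurable fun u : ℕ → β ↦ (∑ i ∈ range n, f (u i)) * ∑ j ∈ range n, g (u j) from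
    (Finset.measurable_sum _ fun i _ ↦ hf.comp (measurable_pi_apply i)).mul
      (Finset.measurable_sum _ fun j _ ↦ hg.comp (measurable_pi_apply j))

theorem lintegral_sum_range_mul_sum_range_of_indepFun [IsFiniteMeasure P] {N : Ω → ℕ}
    (hN : Measurable N) (hU : ∀ i, Measurable (U i)) (hlaw : ∀ i, P.map (U i) = ν)
    (hind : iIndepFun U P) (hNU : IndepFun N (fun ω i ↦ U i ω) P) (hf : Measurable f)
    (hg : Measurable g) :
    ∫⁻ ω, (∑ i ∈ range (N ω), f (U i ω)) * ∑ j ∈ range (N ω), g (U j ω) ∂P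
      = ∫⁻ n : ℕ, (n * ∫⁻ x, f x * g x ∂ν
          + n.descFactorial 2 * ((∫⁻ x, f x ∂ν) * ∫⁻ x, g x ∂ν)) ∂P.map N := by
  rw [hNU.lintegral_comp_eq_lintegral_map
    (g := fun n u ↦ (∑ i ∈ range n, f (u i)) * ∑ j ∈ range n, g (u j)) hN
    (measurable_pi_lambda _ hU) (measurable_sum_range_mul_sum_range hf hg)]
  simp_rw [lintegral_sum_mul_sum_of_iIndepFun hU hlaw hind hf hg]

end SumMulSum

lemma volume_restrict_Icc_zero_one_Iic {a : ℝ} (ha : a ≤ 1) :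
    volume.restrict (Set.Icc (0 : ℝ) 1) (Set.Iic a) = ENNReal.ofReal a := by
  have hinter : Set.Iic a ∩ Set.Icc 0 1 = Set.Icc 0 a := by
    ext x; simp only [Set.mem_inter_iff, Set.mem_Iic, Set.mem_Icc]; grind
  rw [Measure.restrict_apply measurableSet_Iic, hinter, Real.volume_Icc, sub_zero]

lemma volume_restrict_Icc_zero_one_Ioi {b : ℝ} (hb : 0 ≤ b) :
    volume.restrict (Set.Icc (0 : ℝ) 1) (Set.Ioi b) = ENNReal.ofReal (1 - b) := by
  have hinter : Set.Ioi b ∩ Set.Icc 0 1 = Set.Ioc b 1 := by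
    ext x; simp only [Set.mem_inter_iff, Set.mem_Ioi, Set.mem_Icc, Set.mem_Ioc]; grind
  rw [Measure.restrict_apply measurableSet_Ioi, hinter, Real.volume_Ioc]

lemma volume_restrict_Icc_zero_one_Ioc {a b : ℝ} (hb : 0 ≤ b) (ha : a ≤ 1) :
    volume.restrict (Set.Icc (0 : ℝ) 1) (Set.Ioc b a) = ENNReal.ofReal (a - b) := by
  rw [Measure.restrict_apply measurableSet_Ioc,
    Set.inter_eq_left.2 (Set.Ioc_subset_Icc_self.trans (Set.Icc_subset_Icc hb ha)),
    Real.volume_Ioc]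

end ProbabilityTheory

theorem stmt8_general {Ω : Type*} [MeasurableSpace Ω] (P : Measure Ω) [IsProbabilityMeasure P]
    (μ : ℝ≥0)
    (N : Ω → ℕ) (hN : Measurable N)
    (hNlaw : Measure.map N P = ProbabilityTheory.poissonMeasure μ)
    (U : ℕ → Ω → ℝ) (hU : ∀ i, Measurable (U i))
    (hUlaw : ∀ i, Measure.map (U i) P = volume.restrict (Set.Icc (0 : ℝ) 1))
    (hUindep : iIndepFun U P)
    (hNU : IndepFun N (fun ω i => U i ω) P)
    (a b : ℝ) (hb : 0 ≤ b) (hba : b ≤ a) (ha : a ≤ 1) :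
    ∫ ω, (∑ i ∈ Finset.range (N ω), if U i ω ≤ a then (1 : ℝ) else 0)
        * (∑ j ∈ Finset.range (N ω), if b < U j ω then (1 : ℝ) else 0) ∂P
      = a * (1 - b) * (μ : ℝ) ^ 2 + (a - b) * (μ : ℝ) := by
  set f : ℝ → ℝ≥0∞ := (Set.Iic a).indicator 1
  set g : ℝ → ℝ≥0∞ := (Set.Ioi b).indicator 1
  have hf : Measurable f := measurable_one.indicator measurableSet_Iic
  have hg : Measurable g := measurable_one.indicator measurableSet_Ioi
  have hfg : ∀ x, f x * g x = (Set.Ioc b a).indicator 1 x := fun x ↦ by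
    rw [← Set.Iic_inter_Ioi, Set.inter_indicator_one]; rfl
  have hintegrand : ∀ ω, ((∑ i ∈ range (N ω), if U i ω ≤ a then (1 : ℝ) else 0)
        * ∑ j ∈ range (N ω), if b < U j ω then (1 : ℝ) else 0)
        = ((∑ i ∈ range (N ω), f (U i ω)) * ∑ j ∈ range (N ω), g (U j ω)).toReal := by
    intro ω; simp [f, g, Set.indicator_apply]
  have hmeas :
      Measurable fun ω ↦ (∑ i ∈ range (N ω), f (U i ω)) * ∑ j ∈ range (N ω), g (U j ω) :=
    (measurable_sum_range_mul_sum_range hf hg).comp (hN.prodMk (measurable_pi_lambda _ hU))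
  rw [integral_congr_ae (ae_of_all _ hintegrand),
    integral_toReal hmeas.aemeasurable (ae_of_all _ fun ω ↦ by
      simp [f, g, lt_top_iff_ne_top, ENNReal.mul_eq_top, Set.indicator_apply]),
    lintegral_sum_range_mul_sum_range_of_indepFun hN hU hUlaw hUindep hNU hf hg, hNlaw,
    lintegral_mul_add_descFactorial_two_mul_poissonMeasure]
  simp_rw [hfg]
  rw [lintegral_indicator_one measurableSet_Ioc,
    lintegral_indicator_one measurableSet_Iic, lintegral_indicator_one measurableSet_Ioi,
    volume_restrict_Icc_zero_one_Ioc hb ha, volume_restrict_Icc_zero_one_Iic ha,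
    volume_restrict_Icc_zero_one_Ioi hb, ENNReal.toReal_add (by finiteness) (by finiteness)]
  simp only [ENNReal.toReal_mul, ENNReal.toReal_pow, ENNReal.coe_toReal,
    ENNReal.toReal_ofReal (sub_nonneg.2 hba), ENNReal.toReal_ofReal (hb.trans hba),
    ENNReal.toReal_ofReal (sub_nonneg.2 (hba.trans ha))]
  ring

/-- For `N` Poisson with mean `μ > 0` and `(U_i)` i.i.d. uniform on `[0,1]`
independent of `N`, with `0 ≤ b ≤ a ≤ 1`, the thinned counts
`N₁ = ∑_{i<N} 1{U_i ≤ a}` and `N₂ = ∑_{i<N} 1{U_i > b}` satisfy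
`E[N₁·N₂] = a(1−b)·μ² + (a−b)·μ`. -/
theorem stmt8 {Ω : Type*} [MeasurableSpace Ω] (P : Measure Ω) [IsProbabilityMeasure P]
    (μ : ℝ≥0) (hμ : 0 < μ)
    (N : Ω → ℕ) (hN : Measurable N)
    (hNlaw : Measure.map N P = ProbabilityTheory.poissonMeasure μ)
    (U : ℕ → Ω → ℝ) (hU : ∀ i, Measurable (U i))
    (hUlaw : ∀ i, Measure.map (U i) P = volume.restrict (Set.Icc (0 : ℝ) 1))
    (hUindep : iIndepFun U P)
    (hNU : IndepFun N (fun ω i => U i ω) P)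
    (a b : ℝ) (hb : 0 ≤ b) (hba : b ≤ a) (ha : a ≤ 1) :
    ∫ ω, (∑ i ∈ Finset.range (N ω), if U i ω ≤ a then (1 : ℝ) else 0)
        * (∑ j ∈ Finset.range (N ω), if b < U j ω then (1 : ℝ) else 0) ∂P
      = a * (1 - b) * (μ : ℝ) ^ 2 + (a - b) * (μ : ℝ) :=
  stmt8_general P μ N hN hNlaw U hU hUlaw hUindep hNU a b hb hba ha
end

section
/- Let N be a Poisson random variable with mean μ > 0 and let (U_i)_{i∈ℕ} be an i.i.d. sequence of random variables uniformly distributed on [0, 1], with N and (U_i) independent. Fix 0 ≤ b ≤ a ≤ 1 and define N_1 = ∑_{i=0}^{N−1} 1{U_i ≤ a} and N_2 = ∑_{i=0}^{N−1} 1{U_i > b}. Then Cov(N_1, N_2) = (a−b)·μ; in particular the ratio Cov(N_1, N_2)/E[N] equals a − b. -/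
open MeasureTheory ProbabilityTheory Real Finset
open scoped NNReal ENNReal

/-!
Given `N = n`, the two counts are sums over the same `n` i.i.d. points with law `ν`. Expanding
the product, the `n` diagonal terms contribute `ν(A ∩ B)` each and the `n(n-1)` off-diagonal
terms factor by independence into `ν(A) ν(B)`. Averaging against the Poisson law with the
factorial moments `E[N] = μ`, `E[N(N-1)] = μ²` gives `E[N₁N₂] = μ ν(A ∩ B) + μ² ν(A) ν(B)`
while `E[N₁] E[N₂] = μ² ν(A) ν(B)`, so the covariance is `μ ν(A ∩ B)`. For the uniform law,
`A ∩ B = (b, a]` has mass `a - b`.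
-/

namespace ProbabilityTheory

open scoped Nat

lemma poissonWeight_add_mul_descFactorial (r : ℝ≥0) (n k : ℕ) :
    exp (-r) * r ^ (n + k) / (n + k)! * (n + k).descFactorial k
      = r ^ k * (exp (-r) * r ^ n / n !) := by
  have hfac : ((n + k)! : ℝ) = n ! * (n + k).descFactorial k := by
    have := Nat.factorial_mul_descFactorial (Nat.le_add_left k n)
    rw [Nat.add_sub_cancel] at this
    exact_mod_cast this.symm
  have hpos : ((n + k).descFactorial k : ℝ) ≠ 0 := by
    exact_mod_cast (Nat.descFactorial_pos.mpr (Nat.le_add_left k n)).ne'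
  rw [hfac, pow_add]
  field_simp

lemma hasSum_poissonWeight_mul_descFactorial (r : ℝ≥0) (k : ℕ) :
    HasSum (fun n ↦ exp (-r) * r ^ n / n ! * n.descFactorial k) (r ^ k : ℝ) := by
  rw [← hasSum_nat_add_iff' k]
  have hlow : ∑ i ∈ range k, exp (-r) * r ^ i / i ! * (i.descFactorial k : ℝ) = 0 :=
    sum_eq_zero fun i hi ↦ by
      rw [(Nat.descFactorial_eq_zero_iff_lt).mpr (mem_range.mp hi)]; simp
  simp only [hlow, sub_zero, poissonWeight_add_mul_descFactorial]
  simpa using (hasSum_one_poissonMeasure r).mul_left ((r : ℝ) ^ k)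

lemma integrable_descFactorial_poissonMeasure (r : ℝ≥0) (k : ℕ) :
    Integrable (fun n ↦ (n.descFactorial k : ℝ)) (poissonMeasure r) := by
  rw [integrable_poissonMeasure_iff]
  simpa using (hasSum_poissonWeight_mul_descFactorial r k).summable

lemma integral_descFactorial_poissonMeasure (r : ℝ≥0) (k : ℕ) :
    ∫ n, (n.descFactorial k : ℝ) ∂poissonMeasure r = r ^ k := by
  rw [integral_poissonMeasure]
  simpa using (hasSum_poissonWeight_mul_descFactorial r k).tsum_eq

lemma integrable_natCast_poissonMeasure (r : ℝ≥0) :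
    Integrable (fun n : ℕ ↦ (n : ℝ)) (poissonMeasure r) := by
  simpa using integrable_descFactorial_poissonMeasure r 1

lemma integral_natCast_poissonMeasure (r : ℝ≥0) : ∫ n, (n : ℝ) ∂poissonMeasure r = r := by
  simpa using integral_descFactorial_poissonMeasure r 1

lemma integral_natCast_of_map_eq_poissonMeasure {Ω : Type*} [MeasurableSpace Ω] {P : Measure Ω}
    {r : ℝ≥0} {N : Ω → ℕ} (hN : Measurable N) (hNlaw : P.map N = poissonMeasure r) :
    ∫ ω, (N ω : ℝ) ∂P = r := by
  rw [← integral_map hN.aemeasurable (by fun_prop), hNlaw, integral_natCast_poissonMeasure]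

lemma integrable_descFactorial_of_map_eq_poissonMeasure {Ω : Type*} [MeasurableSpace Ω]
    {P : Measure Ω} {r : ℝ≥0} {N : Ω → ℕ} (hN : Measurable N)
    (hNlaw : P.map N = poissonMeasure r) (k : ℕ) :
    Integrable (fun ω ↦ ((N ω).descFactorial k : ℝ)) P := by
  have := integrable_descFactorial_poissonMeasure r k
  rw [← hNlaw] at this
  exact this.comp_measurable hN

end ProbabilityTheory

lemma sum_range_sum_range_ite_eq {R : Type*} [CommRing R] (n : ℕ) (x y : R) :
    ∑ i ∈ range n, ∑ j ∈ range n, (if i = j then x else y)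
      = n * x + n.descFactorial 2 * y := by
  have hsplit (i j : ℕ) : (if i = j then x else y) = y + if i = j then x - y else 0 := by
    split_ifs <;> ring
  simp_rw [hsplit, sum_add_distrib, sum_ite_eq, sum_ite_mem, inter_self, sum_const, card_range,
    nsmul_eq_mul, Nat.cast_descFactorial_two]
  ring

section HitCount

variable {α : Type*}

noncomputable def hitCount (A : Set α) (n : ℕ) (y : ℕ → α) : ℝ :=
  ∑ i ∈ range n, A.indicator 1 (y i)

variable {A B : Set α}

lemma hitCount_nonneg (n : ℕ) (y : ℕ → α) : 0 ≤ hitCount A n y :=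
  sum_nonneg fun _ _ ↦ Set.indicator_nonneg (fun _ _ ↦ zero_le_one) _

lemma hitCount_le (n : ℕ) (y : ℕ → α) : hitCount A n y ≤ n := by
  unfold hitCount
  simpa using sum_le_sum fun i (_ : i ∈ range n) ↦
    Set.indicator_le_self' (s := A) (f := (1 : α → ℝ)) (fun _ _ ↦ zero_le_one) (y i)

variable [MeasurableSpace α]

lemma measurable_hitCount (hA : MeasurableSet A) (n : ℕ) : Measurable (hitCount A n) :=
  Finset.measurable_sum _ fun i _ ↦ (measurable_one.indicator hA).comp (measurable_pi_apply i)

variable {Ω : Type*} [MeasurableSpace Ω] {P : Measure Ω} {U : ℕ → Ω → α} {ν : Measure α} {i : ℕ}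

lemma integrable_indicator_comp [IsFiniteMeasure P] (hU : Measurable (U i))
    (hA : MeasurableSet A) :
    Integrable (fun ω ↦ A.indicator (1 : α → ℝ) (U i ω)) P :=
  ((integrable_const (1 : ℝ)).indicator hA).comp_measurable hU

lemma integral_indicator_comp (hU : Measurable (U i)) (hUν : P.map (U i) = ν)
    (hA : MeasurableSet A) : ∫ ω, A.indicator (1 : α → ℝ) (U i ω) ∂P = ν.real A := by
  rw [← integral_map (f := A.indicator 1) hU.aemeasurable
    (measurable_one.indicator hA).aestronglyMeasurable, hUν, integral_indicator_one hA]

lemma integral_indicator_comp_mul_indicator_comp [IsProbabilityMeasure P]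
    (hU : ∀ i, Measurable (U i)) (hUν : ∀ i, P.map (U i) = ν)
    (hindep : Pairwise fun i j ↦ IndepFun (U i) (U j) P)
    (hA : MeasurableSet A) (hB : MeasurableSet B) (i j : ℕ) :
    ∫ ω, A.indicator 1 (U i ω) * B.indicator 1 (U j ω) ∂P
      = if i = j then ν.real (A ∩ B) else ν.real A * ν.real B := by
  split_ifs with hij
  · subst hij
    simp_rw [← Pi.mul_apply (A.indicator (1 : α → ℝ)), ← Set.inter_indicator_one]
    exact integral_indicator_comp (hU i) (hUν i) (hA.inter hB)
  · have hind := (hindep hij).comp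
      (measurable_one.indicator hA : Measurable (A.indicator (1 : α → ℝ)))
      (measurable_one.indicator hB : Measurable (B.indicator (1 : α → ℝ)))
    rw [← integral_indicator_comp (hU i) (hUν i) hA, ← integral_indicator_comp (hU j) (hUν j) hB]
    exact hind.integral_mul_eq_mul_integral
      ((measurable_one.indicator hA).comp (hU i)).aestronglyMeasurable
      ((measurable_one.indicator hB).comp (hU j)).aestronglyMeasurable

lemma integral_hitCount [IsFiniteMeasure P] (hU : ∀ i, Measurable (U i))
    (hUν : ∀ i, P.map (U i) = ν) (hA : MeasurableSet A) (n : ℕ) :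
    ∫ ω, hitCount A n (fun i ↦ U i ω) ∂P = n * ν.real A := by
  simp only [hitCount]
  rw [integral_finsetSum _ fun i _ ↦ integrable_indicator_comp (hU i) hA]
  simp [integral_indicator_comp (hU _) (hUν _) hA]

lemma integral_hitCount_mul_hitCount [IsProbabilityMeasure P] (hU : ∀ i, Measurable (U i))
    (hUν : ∀ i, P.map (U i) = ν) (hindep : Pairwise fun i j ↦ IndepFun (U i) (U j) P)
    (hA : MeasurableSet A) (hB : MeasurableSet B) (n : ℕ) :
    ∫ ω, hitCount A n (fun i ↦ U i ω) * hitCount B n (fun i ↦ U i ω) ∂P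
      = n * ν.real (A ∩ B) + n.descFactorial 2 * (ν.real A * ν.real B) := by
  have hint (i j : ℕ) : Integrable (fun ω ↦ A.indicator 1 (U i ω) * B.indicator 1 (U j ω)) P :=
    (integrable_indicator_comp (hU j) hB).bdd_mul (c := 1)
      ((measurable_one.indicator hA).comp (hU i)).aestronglyMeasurable
      (ae_of_all _ fun ω ↦ (norm_indicator_le_norm_self _ _).trans (by simp))
  simp only [hitCount, sum_mul_sum]
  rw [integral_finsetSum _ fun i _ ↦ integrable_finsetSum _ fun j _ ↦ hint i j]
  simp_rw [integral_finsetSum _ fun j _ ↦ hint _ j,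
    integral_indicator_comp_mul_indicator_comp hU hUν hindep hA hB]
  exact sum_range_sum_range_ite_eq n _ _

end HitCount

lemma ProbabilityTheory.IndepFun.integral_uncurry_eq_integral_integral
    {Ω β γ : Type*} [MeasurableSpace Ω] [MeasurableSpace β] [MeasurableSpace γ]
    {P : Measure Ω} [IsProbabilityMeasure P] {X : Ω → β} {Y : Ω → γ}
    (hX : Measurable X) (hY : Measurable Y) (hXY : IndepFun X Y P) {G : β → γ → ℝ}
    (hG : Measurable (Function.uncurry G)) (hGi : Integrable (fun ω ↦ G (X ω) (Y ω)) P) :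
    ∫ ω, G (X ω) (Y ω) ∂P = ∫ x, ∫ ω, G x (Y ω) ∂P ∂P.map X := by
  have hXYm : Measurable fun ω ↦ (X ω, Y ω) := hX.prodMk hY
  have hlaw := (indepFun_iff_map_prod_eq_prod_map_map hX.aemeasurable hY.aemeasurable).mp hXY
  have hGint : Integrable (Function.uncurry G) ((P.map X).prod (P.map Y)) := by
    rw [← hlaw]
    exact (integrable_map_measure hG.aestronglyMeasurable hXYm.aemeasurable).mpr hGi
  calc ∫ ω, G (X ω) (Y ω) ∂P = ∫ z, Function.uncurry G z ∂P.map fun ω ↦ (X ω, Y ω) :=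
        (integral_map hXYm.aemeasurable hG.aestronglyMeasurable).symm
    _ = ∫ x, ∫ y, G x y ∂P.map Y ∂P.map X := by rw [hlaw, integral_prod _ hGint]; rfl
    _ = ∫ x, ∫ ω, G x (Y ω) ∂P ∂P.map X := by
        congr with x
        exact integral_map hY.aemeasurable (hG.comp measurable_prodMk_left).aestronglyMeasurable

section CompoundPoisson

variable {α Ω : Type*} [MeasurableSpace α] [MeasurableSpace Ω] {P : Measure Ω}
  [IsProbabilityMeasure P] {r : ℝ≥0} {N : Ω → ℕ} {U : ℕ → Ω → α} {ν : Measure α} {A B : Set α}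
  (hN : Measurable N) (hNlaw : P.map N = poissonMeasure r) (hU : ∀ i, Measurable (U i))
  (hUν : ∀ i, P.map (U i) = ν) (hindep : Pairwise fun i j ↦ IndepFun (U i) (U j) P)
  (hNU : IndepFun N (fun ω i ↦ U i ω) P) (hA : MeasurableSet A) (hB : MeasurableSet B)

include hN hNlaw hU hUν hNU hA in
lemma integral_hitCount_poisson :
    ∫ ω, hitCount A (N ω) (fun i ↦ U i ω) ∂P = r * ν.real A := by
  have hG : Measurable (Function.uncurry fun n y ↦ hitCount A n y) :=
    measurable_from_prod_countable_right (measurable_hitCount hA)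
  have hV : Measurable fun ω i ↦ U i ω := measurable_pi_lambda _ hU
  have hint : Integrable (fun ω ↦ hitCount A (N ω) (fun i ↦ U i ω)) P := by
    refine (integrable_descFactorial_of_map_eq_poissonMeasure hN hNlaw 1).mono'
      (hG.comp (hN.prodMk hV)).aestronglyMeasurable (ae_of_all _ fun ω ↦ ?_)
    rw [Real.norm_of_nonneg (hitCount_nonneg _ _), Nat.descFactorial_one]
    exact hitCount_le _ _
  rw [hNU.integral_uncurry_eq_integral_integral hN hV hG hint, hNlaw]
  simp_rw [integral_hitCount hU hUν hA]
  rw [integral_mul_const, integral_natCast_poissonMeasure]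

include hN hNlaw hU hUν hindep hNU hA hB in
lemma integral_hitCount_mul_hitCount_poisson :
    ∫ ω, hitCount A (N ω) (fun i ↦ U i ω) * hitCount B (N ω) (fun i ↦ U i ω) ∂P
      = r * ν.real (A ∩ B) + r ^ 2 * (ν.real A * ν.real B) := by
  have hG : Measurable (Function.uncurry fun n y ↦ hitCount A n y * hitCount B n y) :=
    measurable_from_prod_countable_right fun n ↦
      (measurable_hitCount hA n).mul (measurable_hitCount hB n)
  have hV : Measurable fun ω i ↦ U i ω := measurable_pi_lambda _ hU
  have hint : Integrable (fun ω ↦ hitCount A (N ω) (fun i ↦ U i ω)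
      * hitCount B (N ω) (fun i ↦ U i ω)) P := by
    refine ((integrable_descFactorial_of_map_eq_poissonMeasure hN hNlaw 1).add
      (integrable_descFactorial_of_map_eq_poissonMeasure hN hNlaw 2)).mono'
      (hG.comp (hN.prodMk hV)).aestronglyMeasurable (ae_of_all _ fun ω ↦ ?_)
    rw [Real.norm_of_nonneg (mul_nonneg (hitCount_nonneg _ _) (hitCount_nonneg _ _))]
    calc _ ≤ (N ω : ℝ) * N ω :=
          mul_le_mul (hitCount_le _ _) (hitCount_le _ _) (hitCount_nonneg _ _) (by positivity)
      _ = _ := by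
          simp only [Pi.add_apply, Nat.descFactorial_one, Nat.cast_descFactorial_two]; ring
  rw [hNU.integral_uncurry_eq_integral_integral hN hV hG hint, hNlaw]
  simp_rw [integral_hitCount_mul_hitCount hU hUν hindep hA hB]
  rw [integral_add ((integrable_natCast_poissonMeasure r).mul_const _)
      ((integrable_descFactorial_poissonMeasure r 2).mul_const _), integral_mul_const,
    integral_mul_const, integral_natCast_poissonMeasure, integral_descFactorial_poissonMeasure]

include hN hNlaw hU hUν hindep hNU hA hB in
theorem integral_hitCount_mul_hitCount_sub_mul_poisson :
    ∫ ω, hitCount A (N ω) (fun i ↦ U i ω) * hitCount B (N ω) (fun i ↦ U i ω) ∂P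
      - (∫ ω, hitCount A (N ω) (fun i ↦ U i ω) ∂P) * ∫ ω, hitCount B (N ω) (fun i ↦ U i ω) ∂P
      = r * ν.real (A ∩ B) := by
  rw [integral_hitCount_mul_hitCount_poisson hN hNlaw hU hUν hindep hNU hA hB,
    integral_hitCount_poisson hN hNlaw hU hUν hNU hA,
    integral_hitCount_poisson hN hNlaw hU hUν hNU hB]
  ring

end CompoundPoisson

lemma volume_restrict_Icc_real_Iic_inter_Ioi {a b : ℝ} (hb : 0 ≤ b) (hba : b ≤ a) (ha : a ≤ 1) :
    (volume.restrict (Set.Icc (0 : ℝ) 1)).real (Set.Iic a ∩ Set.Ioi b) = a - b := by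
  rw [Set.Iic_inter_Ioi, measureReal_restrict_apply measurableSet_Ioc,
    Set.inter_eq_left.mpr (Set.Ioc_subset_Icc_self.trans (Set.Icc_subset_Icc hb ha)),
    Real.volume_real_Ioc_of_le hba]

/-- For `N` Poisson with mean `μ > 0` and `(U_i)` i.i.d. uniform on `[0,1]`
independent of `N`, with `0 ≤ b ≤ a ≤ 1`, the thinned counts
`N₁ = ∑_{i<N} 1{U_i ≤ a}` and `N₂ = ∑_{i<N} 1{U_i > b}` satisfy
`Cov(N₁, N₂) = (a−b)·μ`; in particular `Cov(N₁, N₂)/E[N] = a − b`. -/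
theorem stmt9 {Ω : Type*} [MeasurableSpace Ω] (P : Measure Ω) [IsProbabilityMeasure P]
    (μ : ℝ≥0) (hμ : 0 < μ)
    (N : Ω → ℕ) (hN : Measurable N)
    (hNlaw : Measure.map N P = ProbabilityTheory.poissonMeasure μ)
    (U : ℕ → Ω → ℝ) (hU : ∀ i, Measurable (U i))
    (hUlaw : ∀ i, Measure.map (U i) P = volume.restrict (Set.Icc (0 : ℝ) 1))
    (hUindep : iIndepFun U P)
    (hNU : IndepFun N (fun ω i => U i ω) P)
    (a b : ℝ) (hb : 0 ≤ b) (hba : b ≤ a) (ha : a ≤ 1) :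
    (∫ ω, (∑ i ∈ Finset.range (N ω), if U i ω ≤ a then (1 : ℝ) else 0)
          * (∑ j ∈ Finset.range (N ω), if b < U j ω then (1 : ℝ) else 0) ∂P)
        - (∫ ω, ∑ i ∈ Finset.range (N ω), if U i ω ≤ a then (1 : ℝ) else 0 ∂P)
          * (∫ ω, ∑ j ∈ Finset.range (N ω), if b < U j ω then (1 : ℝ) else 0 ∂P)
      = (a - b) * (μ : ℝ)
    ∧ ((∫ ω, (∑ i ∈ Finset.range (N ω), if U i ω ≤ a then (1 : ℝ) else 0)
          * (∑ j ∈ Finset.range (N ω), if b < U j ω then (1 : ℝ) else 0) ∂P)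
        - (∫ ω, ∑ i ∈ Finset.range (N ω), if U i ω ≤ a then (1 : ℝ) else 0 ∂P)
          * (∫ ω, ∑ j ∈ Finset.range (N ω), if b < U j ω then (1 : ℝ) else 0 ∂P))
        / (∫ ω, (N ω : ℝ) ∂P)
      = a - b := by
  have hIic (u : ℝ) : (if u ≤ a then (1 : ℝ) else 0) = (Set.Iic a).indicator 1 u := by
    simp [Set.indicator_apply]
  have hIoi (u : ℝ) : (if b < u then (1 : ℝ) else 0) = (Set.Ioi b).indicator 1 u := by
    simp [Set.indicator_apply]
  have hcov := integral_hitCount_mul_hitCount_sub_mul_poisson hN hNlaw hU hUlaw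
    (fun _ _ hij ↦ hUindep.indepFun hij) hNU
    (measurableSet_Iic (a := a)) (measurableSet_Ioi (a := b))
  rw [volume_restrict_Icc_real_Iic_inter_Ioi hb hba ha, mul_comm (μ : ℝ)] at hcov
  simp only [hitCount] at hcov
  simp only [hIic, hIoi]
  refine ⟨hcov, ?_⟩
  rw [hcov, integral_natCast_of_map_eq_poissonMeasure hN hNlaw]
  field_simp [hμ.ne']
end
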